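/- Let M be a maximum matching of a bipartite graph G with Dulmage–Mendelsohn classes E, O, U. Then G contains no edge joining two even vertices and no edge joining an even vertex to an unreachable vertex. -/

import Mathlib

open SimpleGraph

/-- Edges of a list alternate w.r.t. membership in `S`; the flag records whether
the next edge must belong to `S`. -/
def altEdges {V : Type*} (S : Set (Sym2 V)) : Bool → List (Sym2 V) → Prop
  | _, [] => True
  | flag, e :: rest => (e ∈ S ↔ flag = true) ∧ altEdges S (!flag) rest

/-- `v` is reachable from some `M`-unmatched vertex by an alternating path
(starting with a non-matching edge) of even length. -/
def EvenVtx {V : Type*} (G : SimpleGraph V) (M : G.Subgraph) (v : V) : Prop :=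
  ∃ u, u ∉ M.verts ∧ ∃ p : G.Walk u v,
    p.IsPath ∧ altEdges M.edgeSet false p.edges ∧ Even p.length

/-- `v` is reachable from some `M`-unmatched vertex by an alternating path of
odd length. -/
def OddVtx {V : Type*} (G : SimpleGraph V) (M : G.Subgraph) (v : V) : Prop :=
  ∃ u, u ∉ M.verts ∧ ∃ p : G.Walk u v,
    p.IsPath ∧ altEdges M.edgeSet false p.edges ∧ Odd p.length

/-- `v` is not reachable from any `M`-unmatched vertex by an alternating path. -/
def UnreachableVtx {V : Type*} (G : SimpleGraph V) (M : G.Subgraph) (v : V) : Prop :=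
  ∀ u (p : G.Walk u v), u ∉ M.verts → p.IsPath →
    altEdges M.edgeSet false p.edges → False

/-!
If `u` is even, witnessed by an alternating path from a free vertex `a`, then cutting that path
at `v` or extending it by the edge `uv` gives an alternating path from `a` to `v`; the edge `uv`
cannot be a matching edge, since the matching partner of `u` precedes it on the path. This
already contradicts `v` being unreachable. If `v` is also even, from a free vertex `b`, then `a`
and `b` lie in opposite colour classes, and joining two alternating paths from `a` and `b` at
their first common vertex gives an augmenting path; augmenting along it adds `a` and `b` to the
matching, contradicting maximality.
-/

theorem altEdges_append {V : Type*} (S : Set (Sym2 V)) (b : Bool) (l₁ l₂ : List (Sym2 V)) :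
    altEdges S b (l₁ ++ l₂) ↔ altEdges S b l₁ ∧ altEdges S (b ^^ decide (Odd l₁.length)) l₂ := by
  induction l₁ generalizing b with
  | nil => simp [altEdges]
  | cons e l ih =>
    rcases Nat.even_or_odd l.length with h | h <;>
      simp [altEdges, ih, and_assoc, h, Nat.not_odd_iff_even.2]

theorem altEdges_reverse {V : Type*} (S : Set (Sym2 V)) (b : Bool) (l : List (Sym2 V)) :
    altEdges S b l.reverse ↔ altEdges S (b ^^ decide (Even l.length)) l := by
  induction l generalizing b with
  | nil => simp [altEdges]
  | cons e l ih =>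
    rcases Nat.even_or_odd l.length with h | h <;>
      simp [altEdges, altEdges_append, ih, h, Nat.not_odd_iff_even.2, Nat.not_even_iff_odd.2,
        and_comm]

theorem altEdges_congr {V : Type*} {S T : Set (Sym2 V)} {l : List (Sym2 V)}
    (h : ∀ e ∈ l, e ∈ S ↔ e ∈ T) (b : Bool) : altEdges S b l ↔ altEdges T b l := by
  induction l generalizing b with
  | nil => simp [altEdges]
  | cons e l ih =>
    simp only [List.mem_cons, forall_eq_or_imp] at h
    simp only [altEdges, h.1, ih h.2]

namespace SimpleGraph

variable {V : Type*} {G : SimpleGraph V}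

theorem altEdges_edges_takeUntil [DecidableEq V] {S : Set (Sym2 V)} {b : Bool} {u v w : V}
    (p : G.Walk u v) (hw : w ∈ p.support) (h : altEdges S b p.edges) :
    altEdges S b (p.takeUntil w hw).edges := by
  rw [← p.take_spec hw, Walk.edges_append, altEdges_append] at h
  exact h.1

theorem Walk.isPath_append_reverse {a b y : V} {p : G.Walk a y} {q : G.Walk b y}
    (hp : p.IsPath) (hq : q.IsPath) (hpq : ∀ z ∈ p.support, z ∈ q.support → z = y) :
    (p.append q.reverse).IsPath := by
  have hqr : q.reverse.support.Nodup := by simpa using hq.support_nodup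
  rw [← Walk.cons_tail_support q.reverse] at hqr
  rw [Walk.isPath_def, Walk.support_append]
  refine hp.support_nodup.append (List.nodup_cons.mp hqr).2 fun z hzp hzq => ?_
  have hzy := hpq z hzp (by simpa using List.mem_of_mem_tail hzq)
  exact (List.nodup_cons.mp hqr).1 (hzy ▸ hzq)

namespace Subgraph

variable {M : G.Subgraph}

theorem IsMatching.deleteVerts_pair (hM : M.IsMatching) {x z : V} (hxz : M.Adj x z) :
    (M.deleteVerts {x, z}).IsMatching := by
  rintro v ⟨hv, hvxz⟩
  obtain ⟨w, hvw, huniq⟩ := hM hv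
  simp only [Set.mem_insert_iff, Set.mem_singleton_iff, not_or] at hvxz
  have hwxz : w ≠ x ∧ w ≠ z := by
    constructor <;> rintro rfl
    · exact hvxz.2 (hM.eq_of_adj_right hvw hxz.symm)
    · exact hvxz.1 (hM.eq_of_adj_right hvw hxz)
  refine ⟨w, ?_, fun y hy => huniq y (deleteVerts_adj.mp hy).2.2.2.2⟩
  simp [hv, M.edge_vert hvw.symm, hvw, hvxz, hwxz]

theorem IsMatching.sup_subgraphOfAdj (hM : M.IsMatching) {v w : V} (h : G.Adj v w)
    (hv : v ∉ M.verts) (hw : w ∉ M.verts) : (M ⊔ G.subgraphOfAdj h).IsMatching :=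
  hM.sup (.subgraphOfAdj h) <| by
    simp [hM.support_eq_verts, (IsMatching.subgraphOfAdj h).support_eq_verts, hv, hw]

theorem IsMatching.deleteVerts_sup_subgraphOfAdj_adj_iff (hM : M.IsMatching) {a x z u w : V}
    (hxz : M.Adj x z) (hax : G.Adj a x) (hu : u ≠ x) (hw : w ≠ x) :
    (M.deleteVerts {x, z} ⊔ G.subgraphOfAdj hax).Adj u w ↔ M.Adj u w := by
  have hz : ∀ {t y}, M.Adj t y → t = z → y = x := fun h ht => hM.eq_of_adj_left (ht ▸ h) hxz.symm
  simp only [sup_adj, deleteVerts_adj, subgraphOfAdj_adj, Sym2.eq, Sym2.rel_iff', Prod.mk.injEq,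
    Prod.swap_prod_mk, Set.mem_insert_iff, Set.mem_singleton_iff]
  constructor
  · rintro (h | h)
    · exact h.2.2.2.2
    · grind
  · intro h
    have := hz h
    have := hz h.symm
    exact Or.inl ⟨M.edge_vert h, by grind, M.edge_vert h.symm, by grind, h⟩

end Subgraph

structure IsAugmentingPath (M : G.Subgraph) {a b : V} (p : G.Walk a b) : Prop where
  isPath : p.IsPath
  ne : a ≠ b
  start_notMem : a ∉ M.verts
  end_notMem : b ∉ M.verts
  alternating : altEdges M.edgeSet false p.edges

theorem IsAugmentingPath.exists_isMatching_verts_eq : ∀ {a b : V} {p : G.Walk a b}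
    {M : G.Subgraph}, M.IsMatching → IsAugmentingPath M p →
    ∃ N : G.Subgraph, N.IsMatching ∧ N.verts = M.verts ∪ {a, b}
  | _, _, .nil, _, _, hp => (hp.ne rfl).elim
  | _, _, .cons h .nil, M, hM, hp =>
    ⟨M ⊔ G.subgraphOfAdj h, hM.sup_subgraphOfAdj h hp.start_notMem hp.end_notMem, by simp⟩
  | a, b, .cons (v := x) hax (.cons (v := z) hxz' q), M, hM, hp => by
    obtain ⟨hpath, hab, ha, hb, halt⟩ := hp
    simp only [Walk.edges_cons, altEdges, Subgraph.mem_edgeSet, Bool.false_eq_true, iff_false,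
      Bool.not_false, iff_true, Bool.not_true] at halt
    obtain ⟨-, hxz, hqalt⟩ := halt
    simp only [Walk.cons_isPath_iff, Walk.support_cons, List.mem_cons, not_or] at hpath
    obtain ⟨⟨hq, hxq⟩, -⟩ := hpath
    have hx : x ∈ M.verts := M.edge_vert hxz
    have hz : z ∈ M.verts := M.edge_vert hxz.symm
    -- trading the matching edge `xz` for `ax` leaves `q` augmenting, from `z`
    set M' := M.deleteVerts {x, z} ⊔ G.subgraphOfAdj hax
    have hM' : M'.IsMatching :=
      (hM.deleteVerts_pair hxz).sup_subgraphOfAdj hax (by simp [ha]) (by simp)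
    have hq' : IsAugmentingPath M' q := by
      refine ⟨hq, by rintro rfl; exact hb hz, ?_, ?_, ?_⟩
      · simp [M', hxz'.ne.symm, ne_of_mem_of_not_mem hz ha]
      · simp [M', hb, hab.symm, (ne_of_mem_of_not_mem hx hb).symm]
      · refine (altEdges_congr (fun e he => ?_) false).mp hqalt
        induction e using Sym2.ind with
        | _ u w =>
        exact (hM.deleteVerts_sup_subgraphOfAdj_adj_iff hxz hax
          (ne_of_mem_of_not_mem (q.fst_mem_support_of_mem_edges he) hxq)
          (ne_of_mem_of_not_mem (q.snd_mem_support_of_mem_edges he) hxq)).symm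
    obtain ⟨N, hN, hNverts⟩ := exists_isMatching_verts_eq hM' hq'
    refine ⟨N, hN, ?_⟩
    ext t
    simp only [hNverts, M', Subgraph.verts_sup, Subgraph.deleteVerts_verts,
      subgraphOfAdj_verts, Set.mem_union, Set.mem_sdiff, Set.mem_insert_iff, Set.mem_singleton_iff]
    grind

theorem IsAugmentingPath.not_of_forall_ncard_le [Finite V] {M : G.Subgraph} (hM : M.IsMatching)
    (hmax : ∀ N : G.Subgraph, N.IsMatching → N.verts.ncard ≤ M.verts.ncard)
    {a b : V} (p : G.Walk a b) : ¬ IsAugmentingPath M p := by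
  intro hp
  obtain ⟨N, hN, hNverts⟩ := hp.exists_isMatching_verts_eq hM
  have hdisj : Disjoint M.verts {a, b} := by
    simp [Set.disjoint_insert_right, hp.start_notMem, hp.end_notMem]
  have := hmax N hN
  rw [hNverts, Set.ncard_union_eq hdisj (Set.toFinite _) (Set.toFinite _), Set.ncard_pair hp.ne]
    at this
  omega

theorem Coloring.eq_of_altPaths_of_forall_ncard_le [Finite V] (c : G.Coloring Bool)
    {M : G.Subgraph} (hM : M.IsMatching)
    (hmax : ∀ N : G.Subgraph, N.IsMatching → N.verts.ncard ≤ M.verts.ncard)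
    {a b y : V} (p : G.Walk a y) (q : G.Walk b y) (hp : p.IsPath) (hq : q.IsPath)
    (ha : a ∉ M.verts) (hb : b ∉ M.verts)
    (hpalt : altEdges M.edgeSet false p.edges) (hqalt : altEdges M.edgeSet false q.edges) :
    c a = c b := by
  classical
  by_contra hab
  by_cases hmeet : ∃ z ∈ q.support, z ≠ y ∧ z ∈ p.support
  · obtain ⟨z, hzq, hzy, hzp⟩ := hmeet
    exact hab <| c.eq_of_altPaths_of_forall_ncard_le hM hmax (p.takeUntil z hzp)
      (q.takeUntil z hzq) (hp.takeUntil hzp) (hq.takeUntil hzq) ha hb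
      (altEdges_edges_takeUntil p hzp hpalt) (altEdges_edges_takeUntil q hzq hqalt)
  · push Not at hmeet
    have hodd : Odd (p.length + q.length) := by
      rw [Nat.odd_add, ← Nat.not_even_iff_odd, c.even_length_iff_congr, c.even_length_iff_congr]
      revert hab
      cases c a <;> cases c b <;> cases c y <;> simp
    refine IsAugmentingPath.not_of_forall_ncard_le hM hmax (p.append q.reverse)
      ⟨Walk.isPath_append_reverse hp hq fun z hzp hzq => ?_, fun h => hab (h ▸ rfl), ha, hb, ?_⟩
    · by_contra hzy
      exact hmeet z hzq hzy hzp
    · rw [Walk.edges_append, Walk.edges_reverse, altEdges_append, altEdges_reverse]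
      refine ⟨hpalt, ?_⟩
      simpa [Nat.odd_add.mp hodd] using hqalt
termination_by q.length
decreasing_by classical exact Walk.length_takeUntil_lt_length hzq hzy

theorem mem_support_of_adj_of_even_length {M : G.Subgraph} (hM : M.IsMatching) {a u v : V}
    (p : G.Walk a u) (ha : a ∉ M.verts) (halt : altEdges M.edgeSet false p.edges)
    (heven : Even p.length) (huv : M.Adj u v) : v ∈ p.support := by
  have hnil : ¬ p.Nil := fun h => ha (h.eq ▸ M.edge_vert huv)
  have hlast : M.Adj p.penultimate u := by
    have hodd : Odd (p.length - 1) :=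
      Nat.Even.sub_odd (Walk.not_nil_iff_lt_length.mp hnil) heven odd_one
    rw [← Walk.concat_dropLast (Walk.adj_penultimate hnil), Walk.edges_concat,
      List.concat_eq_append, altEdges_append] at halt
    simpa [altEdges, hodd] using halt.2
  exact hM.eq_of_adj_left huv hlast.symm ▸ p.getVert_mem_support _

theorem exists_altPath_of_adj_of_even_length {M : G.Subgraph} (hM : M.IsMatching) {a u v : V}
    (p : G.Walk a u) (hp : p.IsPath) (ha : a ∉ M.verts) (halt : altEdges M.edgeSet false p.edges)
    (heven : Even p.length) (huv : G.Adj u v) :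
    ∃ r : G.Walk a v, r.IsPath ∧ altEdges M.edgeSet false r.edges := by
  classical
  by_cases hv : v ∈ p.support
  · exact ⟨p.takeUntil v hv, hp.takeUntil hv, altEdges_edges_takeUntil p hv halt⟩
  · refine ⟨p.concat huv, hp.concat hv huv, ?_⟩
    have hnm : ¬ M.Adj u v := fun h => hv (mem_support_of_adj_of_even_length hM p ha halt heven h)
    rw [Walk.edges_concat, List.concat_eq_append, altEdges_append]
    simp [altEdges, halt, hnm, Walk.length_edges, Nat.not_odd_iff_even.mpr heven]

end SimpleGraph

/-- For a maximum matching `M` of a bipartite graph, there is no edge joining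
two even vertices, and no edge joining an even vertex to an unreachable one. -/
theorem dm_no_even_even_or_even_unreachable_edge
    {V : Type*} [Fintype V] (G : SimpleGraph V)
    (side : V → Bool) (hbip : ∀ u v, G.Adj u v → side u ≠ side v)
    (M : G.Subgraph) (hM : M.IsMatching)
    (hmax : ∀ N : G.Subgraph, N.IsMatching → N.verts.ncard ≤ M.verts.ncard) :
    ∀ u v, G.Adj u v →
      ¬ (EvenVtx G M u ∧ EvenVtx G M v) ∧
      ¬ (EvenVtx G M u ∧ UnreachableVtx G M v) := by
  intro u v huv
  constructor
  · rintro ⟨⟨a, ha, p, hp, hpalt, hpeven⟩, ⟨b, hb, q, hq, hqalt, hqeven⟩⟩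
    let c : G.Coloring Bool := Coloring.mk side (hbip _ _)
    obtain ⟨r, hr, hralt⟩ := exists_altPath_of_adj_of_even_length hM p hp ha hpalt hpeven huv
    have hab : c a = c b := c.eq_of_altPaths_of_forall_ncard_le hM hmax r q hr hq ha hb hralt hqalt
    have hau : c a = c u := Bool.eq_iff_iff.mpr ((c.even_length_iff_congr p).mp hpeven)
    have hbv : c b = c v := Bool.eq_iff_iff.mpr ((c.even_length_iff_congr q).mp hqeven)
    exact c.valid huv (hau.symm.trans (hab.trans hbv))
  · rintro ⟨⟨a, ha, p, hp, hpalt, hpeven⟩, hv⟩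
    obtain ⟨r, hr, hralt⟩ := exists_altPath_of_adj_of_even_length hM p hp ha hpalt hpeven huv
    exact hv a r ha hr hralt
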